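/- arXiv:2309.06032 — 6 statements merged into one kernel-verified Lean document; each statement's English description precedes it below -/
import Mathlib

section
/- For matrices Γ, α ∈ ℝ^{3×3} the following are equivalent (Nye's formulas): α = −Γᵀ + tr(Γ)·𝟙₃ if and only if Γ = −αᵀ + (1/2)·tr(α)·𝟙₃. -/
/-! Write `N_c Γ := -Γᵀ + c·tr(Γ)·𝟙` on `n × n` matrices. Since `tr (N_c Γ) = (c n - 1) tr Γ`,
the composite `N_d ∘ N_c` is the identity as soon as `d (c n - 1) = c`; for `n = 3` the pair
`c = 1`, `d = 1/2` satisfies this relation in both orders, so `N_1` and `N_{1/2}` are mutually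
inverse. -/

open Matrix

namespace Matrix

variable {n R : Type*} [Fintype n] [DecidableEq n] [CommRing R]

def nyeMap (c : R) (Γ : Matrix n n R) : Matrix n n R :=
  -Γᵀ + (c * trace Γ) • 1

theorem trace_nyeMap (c : R) (Γ : Matrix n n R) :
    trace (nyeMap c Γ) = (c * Fintype.card n - 1) * trace Γ := by
  simp only [nyeMap, trace_add, trace_neg, trace_transpose, trace_smul, trace_one, smul_eq_mul]
  ring

theorem nyeMap_nyeMap {c d : R} (h : d * (c * Fintype.card n - 1) = c) (Γ : Matrix n n R) :
    nyeMap d (nyeMap c Γ) = Γ := by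
  rw [nyeMap, trace_nyeMap, ← mul_assoc, h, nyeMap]
  simp only [transpose_add, transpose_neg, transpose_transpose, transpose_smul, transpose_one,
    neg_add, neg_neg]
  abel

theorem eq_nyeMap_iff {c d : R} (hcd : d * (c * Fintype.card n - 1) = c)
    (hdc : c * (d * Fintype.card n - 1) = d) (Γ α : Matrix n n R) :
    α = nyeMap c Γ ↔ Γ = nyeMap d α := by
  constructor <;> rintro rfl
  · exact (nyeMap_nyeMap hcd Γ).symm
  · exact (nyeMap_nyeMap hdc α).symm

end Matrix

theorem stmt_2 (Γ α : Matrix (Fin 3) (Fin 3) ℝ) :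
    α = -Γᵀ + (Matrix.trace Γ) • (1 : Matrix (Fin 3) (Fin 3) ℝ) ↔
    Γ = -αᵀ + ((1 / 2 : ℝ) * Matrix.trace α) • (1 : Matrix (Fin 3) (Fin 3) ℝ) := by
  have h := eq_nyeMap_iff (c := (1 : ℝ)) (d := 1 / 2) (by norm_num) (by norm_num) Γ α
  simpa only [nyeMap, one_mul] using h
end

section
/- Let W : ℝ^{3×3} → ℝ be a quadratic form (i.e. W(X) = B(X,X) for some symmetric bilinear form B on ℝ^{3×3}) which is isotropic in the sense that W(Qᵀ X Q) = W(X) for all Q ∈ SO(3) and all X ∈ ℝ^{3×3}. Then there exist real numbers b₁, b₂, b₃ such that W(X) = b₁‖sym X‖² + b₂‖skew X‖² + b₃ (tr X)² for all X ∈ ℝ^{3×3}. -/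
open Matrix

noncomputable section

/-- Symmetric part of a matrix. -/
def msym {n : ℕ} (X : Matrix (Fin n) (Fin n) ℝ) : Matrix (Fin n) (Fin n) ℝ :=
  (1 / 2 : ℝ) • (X + Xᵀ)

/-- Skew-symmetric part of a matrix. -/
def mskew {n : ℕ} (X : Matrix (Fin n) (Fin n) ℝ) : Matrix (Fin n) (Fin n) ℝ :=
  (1 / 2 : ℝ) • (X - Xᵀ)

/-- Squared Frobenius norm `‖X‖² = tr(XᵀX)`. -/
def mnormSq {n : ℕ} (X : Matrix (Fin n) (Fin n) ℝ) : ℝ :=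
  Matrix.trace (Xᵀ * X)

/-
Polarising `W` gives the bilinear form `S = B + B.flip`. In odd dimension `-Q` has determinant `1`
when `Q` is orthogonal with determinant `-1`, so `S` is invariant under conjugation by all of
`O(3)`. Conjugating by permutation and diagonal sign matrices shows that the coefficient
`S Eᵢⱼ Eₖₗ` vanishes unless the four indices pair up, and otherwise depends only on the pairing
pattern; hence `S = γ tr (Xᵀ Y) + δ tr (X Y) + β tr X tr Y + ε ∑ᵢ Xᵢᵢ Yᵢᵢ`. The first three forms
are `O(3)`-invariant and the last is not (test it on `E₀₀` and a rotation with cosine `3/5`), so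
`ε = 0`. Finally `‖sym X‖²` and `‖skew X‖²` are `(tr (Xᵀ X) ± tr (X X)) / 2`.
-/

section Combinatorics

open Equiv

variable {ι R : Type*} [DecidableEq ι]

theorem Equiv.Perm.exists_apply_eq_and_apply_eq {i j a b : ι} (hij : i ≠ j) (hab : a ≠ b) :
    ∃ σ : Perm ι, σ i = a ∧ σ j = b := by
  have hj : swap i a j ≠ a := by rw [Ne, swap_apply_eq_iff, swap_apply_right]; exact hij.symm
  exact ⟨(swap i a).trans (swap (swap i a j) b),
    by simp [swap_apply_of_ne_of_ne hj.symm hab], by simp⟩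

variable [CommRing R] [NoZeroDivisors R] [CharZero R]

lemma eq_zero_of_sign_invariant {f : ι → ι → ι → ι → R}
    (hsign : ∀ s : ι → R, (∀ m, s m * s m = 1) →
      ∀ i j k l, s i * s j * s k * s l * f i j k l = f i j k l)
    {i j k l : ι} (h : ¬((i = k ∧ j = l) ∨ (i = l ∧ j = k) ∨ (i = j ∧ k = l))) :
    f i j k l = 0 := by
  by_contra hf
  have key : ∀ m, (if i = m then (-1 : R) else 1) * (if j = m then -1 else 1) *
      (if k = m then -1 else 1) * (if l = m then -1 else 1) ≠ -1 := by
    intro m hm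
    have h := hsign (fun x => if x = m then -1 else 1) (fun x => by split_ifs <;> norm_num) i j k l
    simp only [hm, neg_one_mul, CharZero.neg_eq_self_iff] at h
    exact hf h
  have hi := key i
  have hj := key j
  have hk := key k
  -- unless the indices pair up, one of `i`, `j`, `k` occurs an odd number of times
  by_cases hij : i = j <;> by_cases hik : i = k <;> by_cases hil : i = l <;>
    by_cases hjk : j = k <;> by_cases hjl : j = l <;> by_cases hkl : k = l <;> simp_all

theorem eq_of_perm_invariant_of_sign_invariant {a b : ι} (hab : a ≠ b) {f : ι → ι → ι → ι → R}
    (hperm : ∀ (σ : Perm ι) i j k l, f (σ i) (σ j) (σ k) (σ l) = f i j k l)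
    (hsign : ∀ s : ι → R, (∀ m, s m * s m = 1) →
      ∀ i j k l, s i * s j * s k * s l * f i j k l = f i j k l)
    (i j k l : ι) :
    f i j k l = (if i = k ∧ j = l then f a b a b else 0)
      + (if i = l ∧ j = k then f a b b a else 0) + (if i = j ∧ k = l then f a a b b else 0)
      + (if i = j ∧ j = k ∧ k = l then f a a a a - f a b a b - f a b b a - f a a b b else 0) := by
  by_cases hall : i = j ∧ j = k ∧ k = l
  · obtain ⟨rfl, rfl, rfl⟩ := hall
    rw [← hperm (swap i a)]
    simp
  by_cases hp : (i = k ∧ j = l) ∨ (i = l ∧ j = k) ∨ (i = j ∧ k = l)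
  · rcases hp with ⟨rfl, rfl⟩ | ⟨rfl, rfl⟩ | ⟨rfl, rfl⟩
    · have hij : i ≠ j := by grind
      obtain ⟨σ, hσi, hσj⟩ := Perm.exists_apply_eq_and_apply_eq hij hab
      rw [← hperm σ, hσi, hσj]
      simp [hij]
    · have hij : i ≠ j := by grind
      obtain ⟨σ, hσi, hσj⟩ := Perm.exists_apply_eq_and_apply_eq hij hab
      rw [← hperm σ, hσi, hσj]
      simp [hij]
    · have hik : i ≠ k := by grind
      obtain ⟨σ, hσi, hσk⟩ := Perm.exists_apply_eq_and_apply_eq hik hab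
      rw [← hperm σ, hσi, hσk]
      simp [hik]
  · rw [eq_zero_of_sign_invariant hsign hp]
    split_ifs <;> simp_all

end Combinatorics

theorem LinearMap.add_flip_apply_map {R M : Type*} [CommRing R] [AddCommGroup M] [Module R M]
    {B : M →ₗ[R] M →ₗ[R] R} {T : M →ₗ[R] M} (hT : ∀ x, B (T x) (T x) = B x x) (x y : M) :
    (B + B.flip) (T x) (T y) = (B + B.flip) x y := by
  have h := hT (x + y)
  simp only [map_add, LinearMap.add_apply] at h
  simp only [LinearMap.add_apply, LinearMap.flip_apply]
  linear_combination h - hT x - hT y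

namespace Matrix

section Orthogonal

variable {ι R : Type*} [Fintype ι] [DecidableEq ι] [CommRing R]

lemma permMatrix_mem_orthogonalGroup (σ : Equiv.Perm ι) :
    σ.permMatrix R ∈ orthogonalGroup ι R := by
  rw [mem_orthogonalGroup_iff', transpose_permMatrix, ← permMatrix_mul, mul_inv_cancel,
    permMatrix_one]

lemma transpose_permMatrix_mul_mul_permMatrix (σ : Equiv.Perm ι) (X : Matrix ι ι R) :
    (σ.permMatrix R)ᵀ * X * σ.permMatrix R = X.submatrix σ.symm σ.symm := by
  rw [transpose_permMatrix, Equiv.Perm.permMatrix, Equiv.Perm.permMatrix,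
    PEquiv.toMatrix_toPEquiv_mul, PEquiv.mul_toMatrix_toPEquiv]
  rfl

lemma diagonal_mem_orthogonalGroup {s : ι → R} (hs : ∀ i, s i * s i = 1) :
    diagonal s ∈ orthogonalGroup ι R := by
  rw [mem_orthogonalGroup_iff', diagonal_transpose, diagonal_mul_diagonal, ← diagonal_one]
  exact congrArg diagonal (funext hs)

lemma transpose_diagonal_mul_single_mul_diagonal (s : ι → R) (i j : ι) (r : R) :
    (diagonal s)ᵀ * single i j r * diagonal s = (s i * s j) • single i j r := by
  ext a b
  by_cases ha : i = a <;> by_cases hb : j = b <;>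
    simp [single, diagonal_mul, mul_diagonal, ha, hb, mul_right_comm]

lemma orthogonal_conj_mul_conj {Q : Matrix ι ι R} (hQ : Q ∈ orthogonalGroup ι R)
    (X Y : Matrix ι ι R) :
    (Qᵀ * X * Q) * (Qᵀ * Y * Q) = Qᵀ * (X * Y) * Q := by
  rw [mem_orthogonalGroup_iff] at hQ
  simp only [Matrix.mul_assoc, ← Matrix.mul_assoc Q, hQ, Matrix.one_mul]

lemma trace_transpose_mul_mul {Q : Matrix ι ι R} (hQ : Q ∈ orthogonalGroup ι R)
    (X : Matrix ι ι R) :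
    trace (Qᵀ * X * Q) = trace X := by
  rw [mem_orthogonalGroup_iff] at hQ
  rw [trace_mul_comm, ← Matrix.mul_assoc, hQ, Matrix.one_mul]

theorem apply_conj_eq_of_forall_det_eq_one {α : Type*} [NoZeroDivisors R]
    (hι : Odd (Fintype.card ι)) {W : Matrix ι ι R → α}
    (hW : ∀ Q X : Matrix ι ι R, Qᵀ * Q = 1 → Q.det = 1 → W (Qᵀ * X * Q) = W X)
    {Q : Matrix ι ι R} (hQ : Q ∈ orthogonalGroup ι R) (X : Matrix ι ι R) :
    W (Qᵀ * X * Q) = W X := by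
  rw [mem_orthogonalGroup_iff'] at hQ
  have hdet : Q.det * Q.det = 1 := by simpa using congrArg det hQ
  rcases mul_self_eq_one_iff.mp hdet with h | h
  · exact hW Q X hQ h
  · have hneg := hW (-Q) X (by simpa using hQ) (by rw [det_neg, h, hι.neg_one_pow]; ring)
    simpa using hneg

end Orthogonal

section Bilin

variable {ι R : Type*} [Fintype ι] [CommRing R]

def traceTransposeMulBilin : Matrix ι ι R →ₗ[R] Matrix ι ι R →ₗ[R] R :=
  LinearMap.mk₂ R (fun X Y => trace (Xᵀ * Y))
    (fun _ _ _ => by simp [transpose_add, add_mul])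
    (fun _ _ _ => by simp [transpose_smul])
    (fun _ _ _ => by simp [mul_add])
    (fun _ _ _ => by simp)

def traceMulBilin : Matrix ι ι R →ₗ[R] Matrix ι ι R →ₗ[R] R :=
  LinearMap.mk₂ R (fun X Y => trace (X * Y))
    (fun _ _ _ => by simp [add_mul])
    (fun _ _ _ => by simp)
    (fun _ _ _ => by simp [mul_add])
    (fun _ _ _ => by simp)

def traceTraceBilin : Matrix ι ι R →ₗ[R] Matrix ι ι R →ₗ[R] R :=
  LinearMap.mk₂ R (fun X Y => trace X * trace Y)
    (fun _ _ _ => by simp [add_mul])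
    (fun _ _ _ => by simp [mul_assoc])
    (fun _ _ _ => by simp [mul_add])
    (fun _ _ _ => by simp [mul_left_comm])

def diagBilin : Matrix ι ι R →ₗ[R] Matrix ι ι R →ₗ[R] R :=
  LinearMap.mk₂ R (fun X Y => ∑ i, X i i * Y i i)
    (fun _ _ _ => by simp [add_mul, Finset.sum_add_distrib])
    (fun _ _ _ => by simp [mul_assoc, Finset.mul_sum])
    (fun _ _ _ => by simp [mul_add, Finset.sum_add_distrib])
    (fun _ _ _ => by simp [mul_left_comm, Finset.mul_sum])

@[simp] lemma traceTransposeMulBilin_apply (X Y : Matrix ι ι R) :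
    traceTransposeMulBilin X Y = trace (Xᵀ * Y) := rfl

@[simp] lemma traceMulBilin_apply (X Y : Matrix ι ι R) : traceMulBilin X Y = trace (X * Y) := rfl

@[simp] lemma traceTraceBilin_apply (X Y : Matrix ι ι R) :
    traceTraceBilin X Y = trace X * trace Y := rfl

@[simp] lemma diagBilin_apply (X Y : Matrix ι ι R) : diagBilin X Y = ∑ i, X i i * Y i i := rfl

variable [DecidableEq ι]

lemma traceTransposeMulBilin_single (i j k l : ι) :
    traceTransposeMulBilin (single i j (1 : R)) (single k l 1) =
      if i = k ∧ j = l then 1 else 0 := by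
  simp [transpose_single, trace_single_mul, single_apply, eq_comm]

lemma traceMulBilin_single (i j k l : ι) :
    traceMulBilin (single i j (1 : R)) (single k l 1) = if i = l ∧ j = k then 1 else 0 := by
  simp [trace_single_mul, single_apply, eq_comm, and_comm]

lemma traceTraceBilin_single (i j k l : ι) :
    traceTraceBilin (single i j (1 : R)) (single k l 1) = if i = j ∧ k = l then 1 else 0 := by
  by_cases hij : i = j <;> by_cases hkl : k = l <;> simp [hij, hkl]

lemma diagBilin_single (i j k l : ι) :
    diagBilin (single i j (1 : R)) (single k l 1) =
      if i = j ∧ j = k ∧ k = l then 1 else 0 := by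
  rw [diagBilin_apply, Finset.sum_eq_single i (fun x _ hx => by simp [single_apply, Ne.symm hx])
    (by simp)]
  simp only [single_apply]
  grind

variable (ι R) in
def conjInvariantBilin : Submodule R (Matrix ι ι R →ₗ[R] Matrix ι ι R →ₗ[R] R) where
  carrier := {S | ∀ Q ∈ orthogonalGroup ι R, ∀ X Y, S (Qᵀ * X * Q) (Qᵀ * Y * Q) = S X Y}
  add_mem' hS hT Q hQ X Y := by simp [hS Q hQ, hT Q hQ]
  zero_mem' := by simp
  smul_mem' c S hS Q hQ X Y := by simp [hS Q hQ]

lemma traceTransposeMulBilin_mem : traceTransposeMulBilin ∈ conjInvariantBilin ι R := by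
  intro Q hQ X Y
  rw [traceTransposeMulBilin_apply, traceTransposeMulBilin_apply,
    show (Qᵀ * X * Q)ᵀ = Qᵀ * Xᵀ * Q by simp [Matrix.mul_assoc], orthogonal_conj_mul_conj hQ,
    trace_transpose_mul_mul hQ]

lemma traceMulBilin_mem : traceMulBilin ∈ conjInvariantBilin ι R := fun Q hQ X Y => by
  simp only [traceMulBilin_apply, orthogonal_conj_mul_conj hQ, trace_transpose_mul_mul hQ]

lemma traceTraceBilin_mem : traceTraceBilin ∈ conjInvariantBilin ι R := fun Q hQ X Y => by
  simp only [traceTraceBilin_apply, trace_transpose_mul_mul hQ]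

end Bilin

section Coefficients

variable {ι R : Type*} [Fintype ι] [DecidableEq ι] [CommRing R]
  {S : Matrix ι ι R →ₗ[R] Matrix ι ι R →ₗ[R] R}

lemma single_perm_of_mem_conjInvariantBilin (hS : S ∈ conjInvariantBilin ι R) (σ : Equiv.Perm ι)
    (i j k l : ι) :
    S (single (σ i) (σ j) 1) (single (σ k) (σ l) 1) = S (single i j 1) (single k l 1) := by
  have h := hS _ (permMatrix_mem_orthogonalGroup σ) (single i j 1) (single k l 1)
  simpa only [transpose_permMatrix_mul_mul_permMatrix, submatrix_single_equiv, Equiv.symm_symm]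
    using h

lemma single_sign_of_mem_conjInvariantBilin (hS : S ∈ conjInvariantBilin ι R) (s : ι → R)
    (hs : ∀ m, s m * s m = 1) (i j k l : ι) :
    s i * s j * s k * s l * S (single i j 1) (single k l 1) = S (single i j 1) (single k l 1) := by
  have h := hS _ (diagonal_mem_orthogonalGroup hs) (single i j 1) (single k l 1)
  simp only [transpose_diagonal_mul_single_mul_diagonal, map_smul, LinearMap.smul_apply,
    smul_eq_mul] at h
  linear_combination h

end Coefficients

section Fin3

variable {R : Type*} [Field R] [CharZero R]

lemma eq_zero_of_add_smul_diagBilin_mem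
    {A : Matrix (Fin 3) (Fin 3) R →ₗ[R] Matrix (Fin 3) (Fin 3) R →ₗ[R] R}
    (hA : A ∈ conjInvariantBilin (Fin 3) R) {ε : R}
    (h : A + ε • diagBilin ∈ conjInvariantBilin (Fin 3) R) : ε = 0 := by
  let Q : Matrix (Fin 3) (Fin 3) R := !![3/5, 4/5, 0; -(4/5), 3/5, 0; 0, 0, 1]
  have hQ : Q ∈ orthogonalGroup (Fin 3) R := by
    rw [mem_orthogonalGroup_iff']
    ext i j
    fin_cases i <;> fin_cases j <;> simp [Q, Matrix.mul_apply, Fin.sum_univ_three] <;> norm_num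
  have hdiag :
      diagBilin (Qᵀ * single 0 0 1 * Q) (Qᵀ * single 0 0 1 * Q) = (337 / 625 : R) := by
    simp [Q, Matrix.mul_apply, Fin.sum_univ_three, single_apply]
    norm_num
  have h00 := h Q hQ (single 0 0 1) (single 0 0 1)
  simp only [LinearMap.add_apply, LinearMap.smul_apply, hA Q hQ, add_right_inj, smul_eq_mul,
    hdiag, diagBilin_single, and_self, if_true, mul_one] at h00
  have h' : (288 / 625 : R) * ε = 0 := by linear_combination -h00
  simpa using h'

theorem exists_eq_of_mem_conjInvariantBilin
    {S : Matrix (Fin 3) (Fin 3) R →ₗ[R] Matrix (Fin 3) (Fin 3) R →ₗ[R] R}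
    (hS : S ∈ conjInvariantBilin (Fin 3) R) :
    ∃ γ δ β : R, S = γ • traceTransposeMulBilin + δ • traceMulBilin + β • traceTraceBilin := by
  obtain ⟨γ, δ, β, ε, hc⟩ : ∃ γ δ β ε : R, ∀ i j k l : Fin 3,
      S (single i j 1) (single k l 1) = (if i = k ∧ j = l then γ else 0)
        + (if i = l ∧ j = k then δ else 0) + (if i = j ∧ k = l then β else 0)
        + (if i = j ∧ j = k ∧ k = l then ε else 0) :=
    ⟨_, _, _, _, eq_of_perm_invariant_of_sign_invariant zero_ne_one
      (single_perm_of_mem_conjInvariantBilin hS) (single_sign_of_mem_conjInvariantBilin hS)⟩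
  have hSeq : S = γ • traceTransposeMulBilin + δ • traceMulBilin + β • traceTraceBilin
      + ε • diagBilin := by
    refine LinearMap.ext_basis (stdBasis R _ _) (stdBasis R _ _) fun ⟨i, j⟩ ⟨k, l⟩ => ?_
    simp only [stdBasis_eq_single, LinearMap.add_apply, LinearMap.smul_apply, smul_eq_mul,
      traceTransposeMulBilin_single, traceMulBilin_single, traceTraceBilin_single,
      diagBilin_single, mul_ite, mul_one, mul_zero]
    exact hc i j k l
  have hε : ε = 0 := by
    refine eq_zero_of_add_smul_diagBilin_mem ?_ (hSeq ▸ hS)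
    exact add_mem (add_mem (Submodule.smul_mem _ _ traceTransposeMulBilin_mem)
      (Submodule.smul_mem _ _ traceMulBilin_mem)) (Submodule.smul_mem _ _ traceTraceBilin_mem)
  exact ⟨γ, δ, β, by rw [hSeq, hε, zero_smul, add_zero]⟩

end Fin3

end Matrix

lemma mnormSq_msym {n : ℕ} (X : Matrix (Fin n) (Fin n) ℝ) :
    mnormSq (msym X) = (trace (Xᵀ * X) + trace (X * X)) / 2 := by
  have h₁ : trace (X * Xᵀ) = trace (Xᵀ * X) := trace_mul_comm X Xᵀ
  have h₂ : trace (Xᵀ * Xᵀ) = trace (X * X) := by rw [← transpose_mul, trace_transpose]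
  simp only [mnormSq, msym, transpose_smul, transpose_add, transpose_transpose, smul_mul_smul,
    add_mul, mul_add, trace_smul, trace_add, h₁, h₂, smul_eq_mul]
  ring

lemma mnormSq_mskew {n : ℕ} (X : Matrix (Fin n) (Fin n) ℝ) :
    mnormSq (mskew X) = (trace (Xᵀ * X) - trace (X * X)) / 2 := by
  have h₁ : trace (X * Xᵀ) = trace (Xᵀ * X) := trace_mul_comm X Xᵀ
  have h₂ : trace (Xᵀ * Xᵀ) = trace (X * X) := by rw [← transpose_mul, trace_transpose]
  simp only [mnormSq, mskew, transpose_smul, transpose_sub, transpose_transpose, smul_mul_smul,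
    sub_mul, mul_sub, trace_smul, trace_sub, h₁, h₂, smul_eq_mul]
  ring

theorem stmt_4_general
    (B : Matrix (Fin 3) (Fin 3) ℝ →ₗ[ℝ] Matrix (Fin 3) (Fin 3) ℝ →ₗ[ℝ] ℝ)
    (W : Matrix (Fin 3) (Fin 3) ℝ → ℝ)
    (hW : ∀ X, W X = B X X)
    (hiso : ∀ Q X : Matrix (Fin 3) (Fin 3) ℝ,
      Qᵀ * Q = 1 → Q.det = 1 → W (Qᵀ * X * Q) = W X) :
    ∃ b₁ b₂ b₃ : ℝ, ∀ X : Matrix (Fin 3) (Fin 3) ℝ,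
      W X = b₁ * mnormSq (msym X) + b₂ * mnormSq (mskew X)
        + b₃ * (Matrix.trace X) ^ 2 := by
  have hS : B + B.flip ∈ conjInvariantBilin (Fin 3) ℝ := fun Q hQ X Y =>
    LinearMap.add_flip_apply_map (T := LinearMap.mulLeftRight ℝ (Qᵀ, Q)) (fun X => by
      simpa only [hW, LinearMap.mulLeftRight_apply] using
        apply_conj_eq_of_forall_det_eq_one (by decide) hiso hQ X) X Y
  obtain ⟨γ, δ, β, hγδβ⟩ := exists_eq_of_mem_conjInvariantBilin hS
  refine ⟨(γ + δ) / 2, (γ - δ) / 2, β / 2, fun X => ?_⟩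
  have hWX : W X = (B + B.flip) X X / 2 := by
    simp only [hW, LinearMap.add_apply, LinearMap.flip_apply]
    ring
  rw [hWX, hγδβ, mnormSq_msym, mnormSq_mskew]
  simp only [LinearMap.add_apply, LinearMap.smul_apply, smul_eq_mul,
    traceTransposeMulBilin_apply, traceMulBilin_apply, traceTraceBilin_apply]
  ring

theorem stmt_4
    (B : Matrix (Fin 3) (Fin 3) ℝ →ₗ[ℝ] Matrix (Fin 3) (Fin 3) ℝ →ₗ[ℝ] ℝ)
    (hBsym : ∀ X Y : Matrix (Fin 3) (Fin 3) ℝ, B X Y = B Y X)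
    (W : Matrix (Fin 3) (Fin 3) ℝ → ℝ)
    (hW : ∀ X, W X = B X X)
    (hiso : ∀ Q X : Matrix (Fin 3) (Fin 3) ℝ,
      Qᵀ * Q = 1 → Q.det = 1 → W (Qᵀ * X * Q) = W X) :
    ∃ b₁ b₂ b₃ : ℝ, ∀ X : Matrix (Fin 3) (Fin 3) ℝ,
      W X = b₁ * mnormSq (msym X) + b₂ * mnormSq (mskew X)
        + b₃ * (Matrix.trace X) ^ 2 :=
  stmt_4_general B W hW hiso
end
end

section
/- For all real numbers a₁, a₂, a₃ and all Γ ∈ ℝ^{3×3}, setting α := −Γᵀ + tr(Γ)·𝟙₃ (Nye's formula), one has the identity a₁‖dev sym α‖² + a₂‖skew α‖² + a₃ (tr α)² = a₁‖dev sym Γ‖² + a₂‖skew Γ‖² + 4·a₃ (tr Γ)². Hence a quadratic isotropic curvature energy expressed in the dislocation density tensor α coincides, after the substitution of the trace coefficient, with the corresponding quadratic isotropic energy in the wryness tensor Γ. -/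
open Matrix

noncomputable section

/-- Deviatoric (trace-free) part of a 3×3 matrix. -/
def mdev (X : Matrix (Fin 3) (Fin 3) ℝ) : Matrix (Fin 3) (Fin 3) ℝ :=
  X - ((Matrix.trace X) / 3) • (1 : Matrix (Fin 3) (Fin 3) ℝ)

/-! Under Nye's formula `α = -Γᵀ + tr Γ · 𝟙` the three parts of the energy transform separately:
the skew part is unchanged (transposition and the sign cancel, and `𝟙` is symmetric), the
deviatoric symmetric part only changes sign (the deviator kills multiples of `𝟙`), and
`tr α = -tr Γ + 3 tr Γ = 2 tr Γ`. -/

section Parts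

variable {n : ℕ}

theorem msym_add (X Y : Matrix (Fin n) (Fin n) ℝ) : msym (X + Y) = msym X + msym Y := by
  simp only [msym, transpose_add, ← smul_add, add_add_add_comm]

theorem msym_neg (X : Matrix (Fin n) (Fin n) ℝ) : msym (-X) = -msym X := by
  simp only [msym, transpose_neg, ← neg_add, smul_neg]

theorem msym_transpose (X : Matrix (Fin n) (Fin n) ℝ) : msym Xᵀ = msym X := by
  rw [msym, msym, transpose_transpose, add_comm]

theorem msym_smul_one (c : ℝ) : msym (c • (1 : Matrix (Fin n) (Fin n) ℝ)) = c • 1 := by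
  rw [msym, transpose_smul, transpose_one, ← two_smul ℝ, smul_smul]
  norm_num

theorem mskew_add (X Y : Matrix (Fin n) (Fin n) ℝ) : mskew (X + Y) = mskew X + mskew Y := by
  simp only [mskew, transpose_add, ← smul_add, add_sub_add_comm]

theorem mskew_neg (X : Matrix (Fin n) (Fin n) ℝ) : mskew (-X) = -mskew X := by
  simp only [mskew, transpose_neg, ← smul_neg, neg_sub, sub_neg_eq_add, neg_add_eq_sub]

theorem mskew_transpose (X : Matrix (Fin n) (Fin n) ℝ) : mskew Xᵀ = -mskew X := by
  rw [mskew, mskew, transpose_transpose, ← smul_neg, neg_sub]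

theorem mskew_smul_one (c : ℝ) : mskew (c • (1 : Matrix (Fin n) (Fin n) ℝ)) = 0 := by
  rw [mskew, transpose_smul, transpose_one, sub_self, smul_zero]

theorem mnormSq_neg (X : Matrix (Fin n) (Fin n) ℝ) : mnormSq (-X) = mnormSq X := by
  rw [mnormSq, mnormSq, transpose_neg, neg_mul_neg]

end Parts

theorem mdev_neg (X : Matrix (Fin 3) (Fin 3) ℝ) : mdev (-X) = -mdev X := by
  rw [mdev, mdev, trace_neg, neg_div, neg_smul, neg_sub, sub_neg_eq_add, neg_add_eq_sub]

theorem mdev_add_smul_one (X : Matrix (Fin 3) (Fin 3) ℝ) (c : ℝ) :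
    mdev (X + c • 1) = mdev X := by
  have htr : trace (X + c • (1 : Matrix (Fin 3) (Fin 3) ℝ)) = trace X + 3 * c := by
    rw [trace_add, trace_smul, trace_one, Fintype.card_fin, smul_eq_mul]
    ring
  rw [mdev, mdev, htr, add_div, add_smul, mul_div_cancel_left₀ c three_ne_zero]
  abel

theorem trace_neg_transpose_add_trace_smul_one (Γ : Matrix (Fin 3) (Fin 3) ℝ) :
    trace (-Γᵀ + trace Γ • (1 : Matrix (Fin 3) (Fin 3) ℝ)) = 2 * trace Γ := by
  rw [trace_add, trace_neg, trace_transpose, trace_smul, trace_one, Fintype.card_fin, smul_eq_mul]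
  ring

theorem stmt_5 (a₁ a₂ a₃ : ℝ) (Γ α : Matrix (Fin 3) (Fin 3) ℝ)
    (hα : α = -Γᵀ + (Matrix.trace Γ) • (1 : Matrix (Fin 3) (Fin 3) ℝ)) :
    a₁ * mnormSq (mdev (msym α)) + a₂ * mnormSq (mskew α)
        + a₃ * (Matrix.trace α) ^ 2
      = a₁ * mnormSq (mdev (msym Γ)) + a₂ * mnormSq (mskew Γ)
        + 4 * a₃ * (Matrix.trace Γ) ^ 2 := by
  have hdev : mdev (msym α) = -mdev (msym Γ) := by
    rw [hα, msym_add, msym_neg, msym_transpose, msym_smul_one, mdev_add_smul_one, mdev_neg]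
  have hskew : mskew α = mskew Γ := by
    rw [hα, mskew_add, mskew_neg, mskew_transpose, mskew_smul_one, neg_neg, add_zero]
  have htr : trace α = 2 * trace Γ := hα ▸ trace_neg_transpose_add_trace_smul_one Γ
  rw [hdev, mnormSq_neg, hskew, htr]
  ring
end
end

section
/- Let Ω ⊆ ℝ³ be open and let R : Ω → ℝ^{3×3} be differentiable with R(x) ∈ SO(3) for every x ∈ Ω. Define the wryness tensor Γ(x) := (axl(Rᵀ∂_{x_1}R) | axl(Rᵀ∂_{x_2}R) | axl(Rᵀ∂_{x_3}R))(x) ∈ ℝ^{3×3} and the second order dislocation density tensor α(x) := R(x)ᵀ (Curl R)(x). Then for every x ∈ Ω, α(x) = −Γ(x)ᵀ + tr(Γ(x))·𝟙₃. -/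
open Matrix

noncomputable section

/-- Partial derivative in the `k`-th coordinate direction of a scalar field on `ℝ³`. -/
def pd (f : (Fin 3 → ℝ) → ℝ) (k : Fin 3) (x : Fin 3 → ℝ) : ℝ :=
  fderiv ℝ f x (Pi.single k 1)

/-- Entrywise partial derivative `∂_{x_k} R` of a matrix field. -/
def pderivM (R : (Fin 3 → ℝ) → Matrix (Fin 3) (Fin 3) ℝ) (k : Fin 3)
    (x : Fin 3 → ℝ) : Matrix (Fin 3) (Fin 3) ℝ :=
  Matrix.of fun i j => pd (fun y => R y i j) k x

/-- Row-wise Curl of a matrix field: the `i`-th row of `mcurl P x` is the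
curl of the `i`-th row of `P` at `x`. -/
def mcurl (P : (Fin 3 → ℝ) → Matrix (Fin 3) (Fin 3) ℝ) (x : Fin 3 → ℝ) :
    Matrix (Fin 3) (Fin 3) ℝ :=
  Matrix.of fun i =>
    ![pd (fun y => P y i 2) 1 x - pd (fun y => P y i 1) 2 x,
      pd (fun y => P y i 0) 2 x - pd (fun y => P y i 2) 0 x,
      pd (fun y => P y i 1) 0 x - pd (fun y => P y i 0) 1 x]

/-- Axial vector of a (skew-symmetric) 3×3 matrix. -/
def axl (A : Matrix (Fin 3) (Fin 3) ℝ) : Fin 3 → ℝ := ![A 2 1, A 0 2, A 1 0]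

/-- The wryness tensor: columns are `axl(Rᵀ ∂_k R)`. -/
def wryness (R : (Fin 3 → ℝ) → Matrix (Fin 3) (Fin 3) ℝ) (x : Fin 3 → ℝ) :
    Matrix (Fin 3) (Fin 3) ℝ :=
  Matrix.of fun i k => axl ((R x)ᵀ * pderivM R k x) i

/-! Differentiating `Rᵀ R = 𝟙` shows that every `Rᵀ ∂ₖR` is skew-symmetric. Since
`Rᵀ Curl R` is assembled linearly from the three matrices `Rᵀ ∂ₖR`, the identity is then
pure linear algebra on triples of skew-symmetric matrices, i.e. on their axial vectors,
the columns of `Γ`. -/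

section Calculus

variable {x : Fin 3 → ℝ} {k : Fin 3}

theorem pd_mul {f g : (Fin 3 → ℝ) → ℝ} (hf : DifferentiableAt ℝ f x)
    (hg : DifferentiableAt ℝ g x) :
    pd (fun y => f y * g y) k x = pd f k x * g x + f x * pd g k x := by
  simp only [pd, fderiv_fun_mul hf hg, _root_.add_apply, _root_.smul_apply, smul_eq_mul]
  ring

theorem pd_sum {ι : Type*} (s : Finset ι) {f : ι → (Fin 3 → ℝ) → ℝ}
    (hf : ∀ m ∈ s, DifferentiableAt ℝ (f m) x) :
    pd (fun y => ∑ m ∈ s, f m y) k x = ∑ m ∈ s, pd (f m) k x := by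
  simp only [pd, fderiv_fun_sum hf, _root_.sum_apply]

theorem pderivM_mul {A B : (Fin 3 → ℝ) → Matrix (Fin 3) (Fin 3) ℝ}
    (hA : ∀ i j, DifferentiableAt ℝ (fun y => A y i j) x)
    (hB : ∀ i j, DifferentiableAt ℝ (fun y => B y i j) x) :
    pderivM (fun y => A y * B y) k x = pderivM A k x * B x + A x * pderivM B k x := by
  ext i j
  simp only [pderivM, mul_apply, of_apply, Matrix.add_apply]
  rw [pd_sum (f := fun m y => A y i m * B y m j) _ fun m _ => (hA i m).mul (hB m j),
    ← Finset.sum_add_distrib]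
  exact Finset.sum_congr rfl fun m _ => pd_mul (hA i m) (hB m j)

theorem pderivM_transpose (A : (Fin 3 → ℝ) → Matrix (Fin 3) (Fin 3) ℝ) :
    pderivM (fun y => (A y)ᵀ) k x = (pderivM A k x)ᵀ :=
  rfl

theorem pderivM_eq_zero_of_eventuallyEq_const {A : (Fin 3 → ℝ) → Matrix (Fin 3) (Fin 3) ℝ}
    {C : Matrix (Fin 3) (Fin 3) ℝ} (hA : A =ᶠ[nhds x] fun _ => C) : pderivM A k x = 0 := by
  ext i j
  have hij : (fun y => A y i j) =ᶠ[nhds x] fun _ => C i j := hA.mono fun y hy => by simp only [hy]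
  simp [pderivM, pd, hij.fderiv_eq]

theorem transpose_mul_pderivM_skew {R : (Fin 3 → ℝ) → Matrix (Fin 3) (Fin 3) ℝ}
    (hR : ∀ i j, DifferentiableAt ℝ (fun y => R y i j) x)
    (horth : ∀ᶠ y in nhds x, (R y)ᵀ * R y = 1) (k : Fin 3) :
    ((R x)ᵀ * pderivM R k x)ᵀ = -((R x)ᵀ * pderivM R k x) := by
  have h := pderivM_eq_zero_of_eventuallyEq_const (k := k) horth
  rw [pderivM_mul (A := fun y => (R y)ᵀ) (fun i j => hR j i) hR, pderivM_transpose] at h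
  rw [transpose_mul, transpose_transpose]
  exact eq_neg_of_add_eq_zero_left h

end Calculus

section LinearAlgebra

def curlOfPartials (D : Fin 3 → Matrix (Fin 3) (Fin 3) ℝ) : Matrix (Fin 3) (Fin 3) ℝ :=
  Matrix.of fun i => ![D 1 i 2 - D 2 i 1, D 2 i 0 - D 0 i 2, D 0 i 1 - D 1 i 0]

theorem mcurl_eq_curlOfPartials (P : (Fin 3 → ℝ) → Matrix (Fin 3) (Fin 3) ℝ)
    (x : Fin 3 → ℝ) : mcurl P x = curlOfPartials fun k => pderivM P k x :=
  rfl

theorem mul_curlOfPartials (M : Matrix (Fin 3) (Fin 3) ℝ)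
    (D : Fin 3 → Matrix (Fin 3) (Fin 3) ℝ) :
    M * curlOfPartials D = curlOfPartials fun k => M * D k := by
  ext i j
  fin_cases j <;>
    simp only [curlOfPartials, mul_apply, of_apply, Fin.sum_univ_three, Fin.isValue, Fin.mk_one,
      Fin.zero_eta, Fin.reduceFinMk, cons_val, cons_val_zero, cons_val_one] <;> ring

theorem curlOfPartials_of_skew (A : Fin 3 → Matrix (Fin 3) (Fin 3) ℝ)
    (hA : ∀ k, (A k)ᵀ = -A k) :
    curlOfPartials A
      = -(Matrix.of fun i k => axl (A k) i)ᵀ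
        + trace (Matrix.of fun i k => axl (A k) i) • (1 : Matrix (Fin 3) (Fin 3) ℝ) := by
  have hentry : ∀ k i j, A k j i = -A k i j := fun k i j => by
    simpa using congrFun (congrFun (hA k) i) j
  have hdiag : ∀ k i, A k i i = 0 := fun k i => by linarith [hentry k i i]
  ext i j
  fin_cases i <;> fin_cases j <;>
    simp only [curlOfPartials, axl, trace, diag_apply, Fin.sum_univ_three, Matrix.add_apply,
      Matrix.neg_apply, Matrix.smul_apply, transpose_apply, of_apply, one_apply, Fin.isValue,
      Fin.mk_one, Fin.zero_eta, Fin.reduceFinMk, cons_val, cons_val_zero, cons_val_one,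
      Fin.reduceEq, ↓reduceIte, hdiag, hentry _ 1 0, hentry _ 2 0, hentry _ 2 1, smul_eq_mul] <;>
    ring

end LinearAlgebra

theorem stmt_6 (Ω : Set (Fin 3 → ℝ)) (hΩ : IsOpen Ω)
    (R : (Fin 3 → ℝ) → Matrix (Fin 3) (Fin 3) ℝ)
    (hdiff : ∀ i j : Fin 3, DifferentiableOn ℝ (fun y => R y i j) Ω)
    (hSO : ∀ x ∈ Ω, (R x)ᵀ * R x = 1 ∧ (R x).det = 1) :
    ∀ x ∈ Ω,
      (R x)ᵀ * mcurl R x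
        = -(wryness R x)ᵀ
          + (Matrix.trace (wryness R x)) • (1 : Matrix (Fin 3) (Fin 3) ℝ) := by
  intro x hx
  have hΩx : Ω ∈ nhds x := hΩ.mem_nhds hx
  have hskew := transpose_mul_pderivM_skew (fun i j => (hdiff i j).differentiableAt hΩx)
    (Filter.mem_of_superset hΩx fun y hy => (hSO y hy).1)
  rw [mcurl_eq_curlOfPartials, mul_curlOfPartials]
  exact curlOfPartials_of_skew _ hskew
end
end

section
/- Let μ > 0, L_c > 0 and b₁, b₂, b₃ > 0. Define W(X) := μ L_c² ( b₁‖sym X‖² + b₂‖skew X‖² + b₃ (tr X)² ) for X ∈ ℝ^{3×3}. Let G ∈ ℝ^{3×3} have vanishing third column (G_{i3} = 0 for i = 1,2,3), and for c ∈ ℝ³ let G(c) denote the matrix obtained from G by replacing the third column by c (i.e. G(c) = G + c eᵀ₃). Then the infimum over c ∈ ℝ³ of W(G(c)) is attained and equals μ L_c² ( b₁‖sym G_□‖² + b₂‖skew G_□‖² + (b₁b₃/(b₁+b₃)) (tr G_□)² + (2 b₁ b₂/(b₁+b₂)) (G₃₁² + G₃₂²) ), where G_□ ∈ ℝ^{2×2}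 is the upper-left 2×2 block of G. This is the homogenized curvature energy of the flat Cosserat-shell model. -/
open Matrix

noncomputable section

/-- The upper-left 2×2 block of a 3×3 matrix. -/
def ulBlock (G : Matrix (Fin 3) (Fin 3) ℝ) : Matrix (Fin 2) (Fin 2) ℝ :=
  Matrix.of fun i j => G i.castSucc j.castSucc

/-
Since the third column of `G` vanishes, the energy of `G + c e₃ᵀ` splits into the energy of the
block `G_□` plus three independent one-dimensional quadratics: `c₁` and `c₂` meet `G₃₁`, `G₃₂` in
the symmetric and the skew part, and `c₃` meets `tr G_□` in the trace while also entering
`‖sym‖²`. Completing the square, `a (x - u)² + b (x - v)²` has minimum `a b / (a + b) (u - v)²`,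
which produces the two harmonic-mean coefficients.
-/

open Set

lemma isLeast_range_mul_sq_sub_add_mul_sq_sub {a b : ℝ} (hab : 0 < a + b) (u v : ℝ) :
    IsLeast (range fun x => a * (x - u) ^ 2 + b * (x - v) ^ 2) (a * b / (a + b) * (u - v) ^ 2) := by
  have hsq : ∀ x, a * (x - u) ^ 2 + b * (x - v) ^ 2 =
      (a + b) * (x - (a * u + b * v) / (a + b)) ^ 2 + a * b / (a + b) * (u - v) ^ 2 := by
    intro x
    field_simp
    ring
  refine ⟨⟨(a * u + b * v) / (a + b), by simp only [hsq, sub_self]; ring⟩, ?_⟩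
  rintro _ ⟨x, rfl⟩
  dsimp only
  rw [hsq x]
  exact le_add_of_nonneg_left (mul_nonneg hab.le (sq_nonneg _))

lemma isLeast_range_mul_add_sq_add_mul_sub_sq {a b : ℝ} (hab : 0 < a + b) (g : ℝ) :
    IsLeast (range fun x => a * ((x + g) ^ 2 / 2) + b * ((x - g) ^ 2 / 2))
      (2 * a * b / (a + b) * g ^ 2) := by
  have hab' : 0 < a / 2 + b / 2 := by linarith
  convert isLeast_range_mul_sq_sub_add_mul_sq_sub hab' (-g) g using 1
  · congr 1
    funext x
    ring
  · field_simp
    ring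

lemma isLeast_range_mul_sq_add_mul_add_sq {a b : ℝ} (hab : 0 < a + b) (t : ℝ) :
    IsLeast (range fun x => a * x ^ 2 + b * (t + x) ^ 2) (a * b / (a + b) * t ^ 2) := by
  convert isLeast_range_mul_sq_sub_add_mul_sq_sub hab 0 (-t) using 1
  · congr 1
    funext x
    ring
  · ring

lemma isLeast_range_add_fin_three {α : Type*} {f g h : α → ℝ} {a b d : ℝ}
    (hf : IsLeast (range f) a) (hg : IsLeast (range g) b) (hh : IsLeast (range h) d) :
    IsLeast (range fun c : Fin 3 → α => f (c 0) + g (c 1) + h (c 2)) (a + b + d) := by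
  obtain ⟨⟨x, rfl⟩, hfa⟩ := hf
  obtain ⟨⟨y, rfl⟩, hgb⟩ := hg
  obtain ⟨⟨z, rfl⟩, hhd⟩ := hh
  refine ⟨⟨![x, y, z], rfl⟩, ?_⟩
  rintro _ ⟨c, rfl⟩
  exact add_le_add (add_le_add (hfa ⟨c 0, rfl⟩) (hgb ⟨c 1, rfl⟩)) (hhd ⟨c 2, rfl⟩)

section ThirdColumn

variable {G : Matrix (Fin 3) (Fin 3) ℝ}

lemma mnormSq_msym_add_vecMulVec_single_two (hG : ∀ i, G i 2 = 0) (c : Fin 3 → ℝ) :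
    mnormSq (msym (G + vecMulVec c (Pi.single 2 1))) =
      mnormSq (msym (ulBlock G)) + ((c 0 + G 2 0) ^ 2 / 2 + (c 1 + G 2 1) ^ 2 / 2) + c 2 ^ 2 := by
  simp only [mnormSq, msym, ulBlock, trace, diag_apply, Matrix.mul_apply, transpose_apply,
    Matrix.smul_apply, Matrix.add_apply, of_apply, vecMulVec, Pi.single_apply, Fin.sum_univ_three,
    Fin.sum_univ_two, Fin.castSucc_zero, Fin.castSucc_one, hG, smul_eq_mul, Fin.isValue,
    Fin.reduceEq, if_true, if_false]
  ring

lemma mnormSq_mskew_add_vecMulVec_single_two (hG : ∀ i, G i 2 = 0) (c : Fin 3 → ℝ) :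
    mnormSq (mskew (G + vecMulVec c (Pi.single 2 1))) =
      mnormSq (mskew (ulBlock G)) + ((c 0 - G 2 0) ^ 2 / 2 + (c 1 - G 2 1) ^ 2 / 2) := by
  simp only [mnormSq, mskew, ulBlock, trace, diag_apply, Matrix.mul_apply, transpose_apply,
    Matrix.smul_apply, Matrix.add_apply, Matrix.sub_apply, of_apply, vecMulVec, Pi.single_apply,
    Fin.sum_univ_three, Fin.sum_univ_two, Fin.castSucc_zero, Fin.castSucc_one, hG, smul_eq_mul,
    Fin.isValue, Fin.reduceEq, if_true, if_false]
  ring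

lemma trace_add_vecMulVec_single_two (hG : ∀ i, G i 2 = 0) (c : Fin 3 → ℝ) :
    trace (G + vecMulVec c (Pi.single 2 1)) = trace (ulBlock G) + c 2 := by
  simp only [ulBlock, trace, diag_apply, Matrix.add_apply, of_apply, vecMulVec, Pi.single_apply,
    Fin.sum_univ_three, Fin.sum_univ_two, Fin.castSucc_zero, Fin.castSucc_one, hG, Fin.isValue,
    Fin.reduceEq, if_true, if_false]
  ring

end ThirdColumn

theorem stmt_9_general (μ Lc b₁ b₂ b₃ : ℝ) (hμ : 0 < μ)
    (hb₁ : 0 < b₁) (hb₂ : 0 < b₂) (hb₃ : 0 < b₃)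
    (G : Matrix (Fin 3) (Fin 3) ℝ) (hG : ∀ i, G i 2 = 0) :
    IsLeast
      (Set.range fun c : Fin 3 → ℝ =>
        μ * Lc ^ 2 *
          (b₁ * mnormSq (msym (G + vecMulVec c (Pi.single 2 1)))
            + b₂ * mnormSq (mskew (G + vecMulVec c (Pi.single 2 1)))
            + b₃ * (Matrix.trace (G + vecMulVec c (Pi.single 2 1))) ^ 2))
      (μ * Lc ^ 2 *
        (b₁ * mnormSq (msym (ulBlock G))
          + b₂ * mnormSq (mskew (ulBlock G))
          + (b₁ * b₃ / (b₁ + b₃)) * (Matrix.trace (ulBlock G)) ^ 2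
          + (2 * b₁ * b₂ / (b₁ + b₂)) * ((G 2 0) ^ 2 + (G 2 1) ^ 2))) := by
  have hmin := isLeast_range_add_fin_three
    (isLeast_range_mul_add_sq_add_mul_sub_sq (add_pos hb₁ hb₂) (G 2 0))
    (isLeast_range_mul_add_sq_add_mul_sub_sq (add_pos hb₁ hb₂) (G 2 1))
    (isLeast_range_mul_sq_add_mul_add_sq (add_pos hb₁ hb₃) (trace (ulBlock G)))
  have hmono : Monotone fun s =>
      μ * Lc ^ 2 * (b₁ * mnormSq (msym (ulBlock G)) + b₂ * mnormSq (mskew (ulBlock G)) + s) :=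
    fun s t hst => by dsimp only; gcongr
  -- the ascription puts `h` at the goal's `LE ℝ` instance rather than `Preorder.toLE`
  have h : IsLeast (α := ℝ) _ _ := hmono.map_isLeast hmin
  rw [← range_comp] at h
  convert h using 2
  · funext c
    simp only [Function.comp, mnormSq_msym_add_vecMulVec_single_two hG,
      mnormSq_mskew_add_vecMulVec_single_two hG, trace_add_vecMulVec_single_two hG]
    ring
  · ring

theorem stmt_9 (μ Lc b₁ b₂ b₃ : ℝ) (hμ : 0 < μ) (hL : 0 < Lc)
    (hb₁ : 0 < b₁) (hb₂ : 0 < b₂) (hb₃ : 0 < b₃)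
    (G : Matrix (Fin 3) (Fin 3) ℝ) (hG : ∀ i, G i 2 = 0) :
    IsLeast
      (Set.range fun c : Fin 3 → ℝ =>
        μ * Lc ^ 2 *
          (b₁ * mnormSq (msym (G + vecMulVec c (Pi.single 2 1)))
            + b₂ * mnormSq (mskew (G + vecMulVec c (Pi.single 2 1)))
            + b₃ * (Matrix.trace (G + vecMulVec c (Pi.single 2 1))) ^ 2))
      (μ * Lc ^ 2 *
        (b₁ * mnormSq (msym (ulBlock G))
          + b₂ * mnormSq (mskew (ulBlock G))
          + (b₁ * b₃ / (b₁ + b₃)) * (Matrix.trace (ulBlock G)) ^ 2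
          + (2 * b₁ * b₂ / (b₁ + b₂)) * ((G 2 0) ^ 2 + (G 2 1) ^ 2))) :=
  stmt_9_general μ Lc b₁ b₂ b₃ hμ hb₁ hb₂ hb₃ G hG
end
end

section
/- Let μ > 0, μ_c > 0 and λ ∈ ℝ with 2μ + 3λ > 0, let n ∈ ℝ³ with ‖n‖ = 1, and let E ∈ ℝ^{3×3} satisfy E n = 0. Then the function v ↦ μ‖sym(E + v ⊗ n)‖² + μ_c‖skew(E + v ⊗ n)‖² + (λ/2)(tr(E + v ⊗ n))² has a unique global minimizer v* = ((μ_c − μ)/(μ_c + μ)) Eᵀn − (λ/(λ + 2μ)) tr(E) n. Consequently, for any Q ∈ SO(3) the optimal third-column vector in the membrane optimization problem is d̃* = Q(n + v*) = (1 − (λ/(λ+2μ)) tr(E)) Q n + ((μ_c − μ)/(μ_c + μ)) Q Eᵀ n. -/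
open Matrix

noncomputable section

/-- Squared Euclidean norm on `ℝ³`. -/
def vnormSq (v : Fin 3 → ℝ) : ℝ := ∑ i, (v i) ^ 2

/-- The quadratic isotropic membrane energy. -/
def Wmp (μ μc lam : ℝ) (X : Matrix (Fin 3) (Fin 3) ℝ) : ℝ :=
  μ * mnormSq (msym X) + μc * mnormSq (mskew X)
    + (lam / 2) * (Matrix.trace X) ^ 2

/-- The optimal vector `v*` of the membrane optimization problem. -/
def vstar (μ μc lam : ℝ) (n : Fin 3 → ℝ) (E : Matrix (Fin 3) (Fin 3) ℝ) :
    Fin 3 → ℝ :=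
  ((μc - μ) / (μc + μ)) • Eᵀ.mulVec n - (lam / (lam + 2 * μ) * Matrix.trace E) • n


/-! Write `W = Wmp μ μc lam`. For `n ⬝ᵥ n = 1` one has
`W (w ⊗ n) = (μ + μc)/2 (‖w‖² - (w ⬝ n)²) + (λ + 2μ)/2 (w ⬝ n)²`, which by Cauchy–Schwarz is
positive definite in `w` once `μ + μc > 0` and `λ + 2μ > 0` (the latter follows from
`2μ + 3λ > 0`). Since `E n = 0`, the cross term of the quadratic form `W` between
`E + v* ⊗ n` and `w ⊗ n` vanishes for every `w`, so `v*` is the critical point and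
`W (E + v ⊗ n) = W (E + v* ⊗ n) + W ((v - v*) ⊗ n)`. -/

lemma dotProduct_sq_le_mul {ι : Type*} [Fintype ι] (v w : ι → ℝ) :
    (v ⬝ᵥ w) ^ 2 ≤ (v ⬝ᵥ v) * (w ⬝ᵥ w) := by
  simpa only [dotProduct, sq] using Finset.sum_mul_sq_le_sq_mul_sq Finset.univ v w

lemma Wmp_add_vecMulVec (μ μc lam : ℝ) (X : Matrix (Fin 3) (Fin 3) ℝ) (w n : Fin 3 → ℝ) :
    Wmp μ μc lam (X + vecMulVec w n) = Wmp μ μc lam X + Wmp μ μc lam (vecMulVec w n)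
      + (μ + μc) * (w ⬝ᵥ X *ᵥ n) + (μ - μc) * (w ⬝ᵥ Xᵀ *ᵥ n) + lam * trace X * (w ⬝ᵥ n) := by
  simp only [Wmp, mnormSq, msym, mskew, trace, diag, mul_apply, transpose_apply,
    Matrix.add_apply, Matrix.smul_apply, Matrix.sub_apply, vecMulVec_apply, dotProduct, mulVec,
    Fin.sum_univ_three, smul_eq_mul]
  ring

lemma Wmp_vecMulVec (μ μc lam : ℝ) {n : Fin 3 → ℝ} (hn : n ⬝ᵥ n = 1) (w : Fin 3 → ℝ) :
    Wmp μ μc lam (vecMulVec w n)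
      = (μ + μc) / 2 * (w ⬝ᵥ w - (w ⬝ᵥ n) ^ 2) + (lam + 2 * μ) / 2 * (w ⬝ᵥ n) ^ 2 := by
  have h : Wmp μ μc lam (vecMulVec w n)
      = (μ + μc) / 2 * (w ⬝ᵥ w) * (n ⬝ᵥ n) + (μ - μc + lam) / 2 * (w ⬝ᵥ n) ^ 2 := by
    simp only [Wmp, mnormSq, msym, mskew, trace, diag, mul_apply, transpose_apply,
      Matrix.add_apply, Matrix.smul_apply, Matrix.sub_apply, vecMulVec_apply, dotProduct,
      Fin.sum_univ_three, smul_eq_mul]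
    ring
  rw [h, hn]
  ring

section PositiveDefinite

variable {μ μc lam : ℝ} (hshear : 0 < μ + μc) (hlong : 0 < lam + 2 * μ)
  {n : Fin 3 → ℝ} (hn : n ⬝ᵥ n = 1)
include hshear hlong hn

lemma Wmp_vecMulVec_nonneg (w : Fin 3 → ℝ) : 0 ≤ Wmp μ μc lam (vecMulVec w n) := by
  have hcs := dotProduct_sq_le_mul w n
  rw [hn, mul_one] at hcs
  rw [Wmp_vecMulVec μ μc lam hn]
  exact add_nonneg (mul_nonneg (by positivity) (sub_nonneg.2 hcs)) (by positivity)

lemma eq_zero_of_Wmp_vecMulVec_eq_zero {w : Fin 3 → ℝ} (h : Wmp μ μc lam (vecMulVec w n) = 0) :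
    w = 0 := by
  have hcs := dotProduct_sq_le_mul w n
  rw [hn, mul_one] at hcs
  rw [Wmp_vecMulVec μ μc lam hn] at h
  have hwn : (w ⬝ᵥ n) ^ 2 = 0 := by nlinarith [sq_nonneg (w ⬝ᵥ n)]
  have hww : w ⬝ᵥ w = 0 := by nlinarith
  exact dotProduct_self_eq_zero.mp hww

end PositiveDefinite

lemma Wmp_add_vecMulVec_eq_Wmp_vstar_add (μ μc lam : ℝ) (hshear : μc + μ ≠ 0)
    (hlong : lam + 2 * μ ≠ 0) {n : Fin 3 → ℝ} (hn : n ⬝ᵥ n = 1)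
    {E : Matrix (Fin 3) (Fin 3) ℝ} (hE : E *ᵥ n = 0) (v : Fin 3 → ℝ) :
    Wmp μ μc lam (E + vecMulVec v n) = Wmp μ μc lam (E + vecMulVec (vstar μ μc lam n E) n)
      + Wmp μ μc lam (vecMulVec (v - vstar μ μc lam n E) n) := by
  set c := (μc - μ) / (μc + μ) with hc
  set d := lam / (lam + 2 * μ) * trace E with hd
  set vs := vstar μ μc lam n E
  have hpn : Eᵀ *ᵥ n ⬝ᵥ n = 0 := by rw [mulVec_transpose, ← dotProduct_mulVec, hE, dotProduct_zero]
  have hvs : vs = c • Eᵀ *ᵥ n - d • n := rfl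
  have hvsn : vs ⬝ᵥ n = -d := by
    simp only [hvs, sub_dotProduct, smul_dotProduct, hpn, hn, smul_eq_mul]; ring
  have hc' : c * (μc + μ) = μc - μ := by rw [hc]; field_simp
  have hd' : d * (lam + 2 * μ) = lam * trace E := by rw [hd]; field_simp
  obtain ⟨w, rfl⟩ : ∃ w, v = vs + w := ⟨v - vs, by abel⟩
  have hwvs : w ⬝ᵥ vs = c * (w ⬝ᵥ Eᵀ *ᵥ n) - d * (w ⬝ᵥ n) := by
    simp only [hvs, dotProduct_sub, dotProduct_smul, smul_eq_mul]
  rw [add_sub_cancel_left, add_vecMulVec, ← add_assoc, Wmp_add_vecMulVec]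
  simp only [Matrix.add_mulVec, transpose_add, transpose_vecMulVec, vecMulVec_mulVec, hE, hvsn,
    trace_add, trace_vecMulVec, dotProduct_add, dotProduct_smul, dotProduct_zero, op_smul_eq_smul,
    smul_eq_mul, hn, hwvs]
  linear_combination (w ⬝ᵥ Eᵀ *ᵥ n) * hc' - (w ⬝ᵥ n) * hd'

lemma mulVec_add_vstar (μ μc lam : ℝ) (n : Fin 3 → ℝ) (E Q : Matrix (Fin 3) (Fin 3) ℝ) :
    Q *ᵥ (n + vstar μ μc lam n E)
      = (1 - lam / (lam + 2 * μ) * trace E) • Q *ᵥ n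
        + ((μc - μ) / (μc + μ)) • Q *ᵥ (Eᵀ *ᵥ n) := by
  rw [vstar, mulVec_add, mulVec_sub, mulVec_smul, mulVec_smul, sub_smul, one_smul]
  abel

theorem stmt_19 (μ μc lam : ℝ) (hμ : 0 < μ) (hμc : 0 < μc)
    (hbulk : 0 < 2 * μ + 3 * lam)
    (n : Fin 3 → ℝ) (hn : vnormSq n = 1)
    (E : Matrix (Fin 3) (Fin 3) ℝ) (hE : E.mulVec n = 0) :
    (∀ v : Fin 3 → ℝ,
        Wmp μ μc lam (E + vecMulVec (vstar μ μc lam n E) n)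
          ≤ Wmp μ μc lam (E + vecMulVec v n)) ∧
    (∀ v : Fin 3 → ℝ,
        Wmp μ μc lam (E + vecMulVec v n)
            = Wmp μ μc lam (E + vecMulVec (vstar μ μc lam n E) n) →
          v = vstar μ μc lam n E) ∧
    (∀ Q : Matrix (Fin 3) (Fin 3) ℝ, Qᵀ * Q = 1 → Q.det = 1 →
        Q.mulVec (n + vstar μ μc lam n E)
          = (1 - lam / (lam + 2 * μ) * Matrix.trace E) • Q.mulVec n
            + ((μc - μ) / (μc + μ)) • Q.mulVec (Eᵀ.mulVec n)) := by
  have hn' : n ⬝ᵥ n = 1 := by simpa only [vnormSq, dotProduct, sq] using hn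
  have hshear : 0 < μ + μc := by linarith
  have hlong : 0 < lam + 2 * μ := by linarith
  have hsplit := Wmp_add_vecMulVec_eq_Wmp_vstar_add μ μc lam (by linarith) hlong.ne' hn' hE
  refine ⟨fun v => ?_, fun v hv => ?_, fun Q _ _ => mulVec_add_vstar μ μc lam n E Q⟩
  · rw [hsplit v]
    linarith [Wmp_vecMulVec_nonneg hshear hlong hn' (v - vstar μ μc lam n E)]
  · rw [hsplit v, add_eq_left] at hv
    exact sub_eq_zero.mp (eq_zero_of_Wmp_vecMulVec_eq_zero hshear hlong hn' hv)
end
end
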